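/- Let W be a general channel with finite input alphabet 𝒳 and finite output alphabet 𝒴, and define its capacity C(W) = sup_X I_inf(X;Y), the supremum over all general sources X over 𝒳 (with Y the corresponding output). For a real rate R, define E^{(n)}(R) = max over probability mass functions P_{X^n} on 𝒳^n and over ρ ∈ [0,1] of { E_0^{(n)}(ρ, X) − ρ·R }. If R < C(W), then n·E^{(n)}(R) → ∞ as n → ∞. -/

import Mathlib

open Real Filter
open scoped Classical

/-- `Pr[(1/n)·ln(Wⁿ(Yⁿ|Xⁿ)/P_{Yⁿ}(Yⁿ)) < β]` for the joint distribution
`P_{XⁿYⁿ}(xⁿ,yⁿ) = P_{Xⁿ}(xⁿ)·Wⁿ(yⁿ|xⁿ)`. -/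
noncomputable def prInfDensityLT {𝒳 𝒴 : Type*} [Fintype 𝒳] [Fintype 𝒴]
    (P : (n : ℕ) → (Fin n → 𝒳) → ℝ)
    (W : (n : ℕ) → (Fin n → 𝒳) → (Fin n → 𝒴) → ℝ)
    (β : ℝ) (n : ℕ) : ℝ :=
  ∑ x : Fin n → 𝒳, ∑ y : Fin n → 𝒴,
    if (1 / (n : ℝ)) * Real.log (W n x y / ∑ x' : Fin n → 𝒳, P n x' * W n x' y) < β
    then P n x * W n x y else 0

/-- The spectral inf-mutual information rate `I_inf(X;Y)`. -/
noncomputable def specInfMutualInfo {𝒳 𝒴 : Type*} [Fintype 𝒳] [Fintype 𝒴]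
    (P : (n : ℕ) → (Fin n → 𝒳) → ℝ)
    (W : (n : ℕ) → (Fin n → 𝒳) → (Fin n → 𝒴) → ℝ) : ℝ :=
  sSup {β : ℝ | Tendsto (fun n => prInfDensityLT P W β n) atTop (nhds 0)}

/-- The capacity `C(W) = sup_X I_inf(X;Y)` of a general channel, the supremum over
all general sources `X` (sequences of probability mass functions on `𝒳ⁿ`). -/
noncomputable def capacity {𝒳 𝒴 : Type*} [Fintype 𝒳] [Fintype 𝒴]
    (W : (n : ℕ) → (Fin n → 𝒳) → (Fin n → 𝒴) → ℝ) : ℝ :=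
  sSup {I : ℝ | ∃ P : (n : ℕ) → (Fin n → 𝒳) → ℝ,
    (∀ n x, 0 ≤ P n x) ∧ (∀ n, ∑ x : Fin n → 𝒳, P n x = 1) ∧
    I = specInfMutualInfo P W}

/-- Gallager's function `E₀⁽ⁿ⁾(ρ, X)`. -/
noncomputable def gallagerE0 {𝒳 𝒴 : Type*} [Fintype 𝒳] [Fintype 𝒴] (n : ℕ)
    (Pn : (Fin n → 𝒳) → ℝ) (Wn : (Fin n → 𝒳) → (Fin n → 𝒴) → ℝ) (ρ : ℝ) : ℝ :=
  -(1 / (n : ℝ)) * Real.log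
    (∑ y : Fin n → 𝒴, (∑ x : Fin n → 𝒳, Pn x * Wn x y ^ (1 / (1 + ρ))) ^ (1 + ρ))

/-- `E⁽ⁿ⁾(R)`: the maximum of `E₀⁽ⁿ⁾(ρ, X) − ρR` over all probability mass functions
on `𝒳ⁿ` and all `ρ ∈ [0,1]`. -/
noncomputable def gallagerExponent {𝒳 𝒴 : Type*} [Fintype 𝒳] [Fintype 𝒴]
    (W : (n : ℕ) → (Fin n → 𝒳) → (Fin n → 𝒴) → ℝ) (R : ℝ) (n : ℕ) : ℝ :=
  sSup {v : ℝ | ∃ Pn : (Fin n → 𝒳) → ℝ,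
    (∀ x, 0 ≤ Pn x) ∧ (∑ x : Fin n → 𝒳, Pn x = 1) ∧
    ∃ ρ ∈ Set.Icc (0 : ℝ) 1, v = gallagerE0 n Pn (W n) ρ - ρ * R}

/-!
Choose a source `X` with `I_inf(X;Y) > R` and a rate `β > R` for which the tail
`εₙ = Pr[(1/n)·ln(Wⁿ(Yⁿ|Xⁿ)/P_{Yⁿ}(Yⁿ)) < β]` tends to zero. Splitting Gallager's sum at the
threshold `Wⁿ(y|x) = e^{nβ}·P_{Yⁿ}(y)` gives `e^{-n·E₀⁽ⁿ⁾(ρ,X)} ≤ 2·(e^{-ρnβ} + εₙ)`. For `ρ = k/n`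
and `n` so large that `εₙ ≤ e^{-kβ}`, this yields `n·E⁽ⁿ⁾(R) ≥ k·(β - R) - ln 4`, for every `k`.
-/

section FiniteChannel

open Finset

variable {𝒳 𝒴 : Type*} [Fintype 𝒳] [Fintype 𝒴] {p : 𝒳 → ℝ} {w : 𝒳 → 𝒴 → ℝ}

noncomputable def gallagerSum (p : 𝒳 → ℝ) (w : 𝒳 → 𝒴 → ℝ) (ρ : ℝ) : ℝ :=
  ∑ y, (∑ x, p x * w x y ^ (1 / (1 + ρ))) ^ (1 + ρ)

/-- `Pr[w(Y|X) < c·q(Y)]`, where `q` is the output distribution of the input distribution `p`. -/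
noncomputable def prDensityRatioLT (p : 𝒳 → ℝ) (w : 𝒳 → 𝒴 → ℝ) (c : ℝ) : ℝ :=
  ∑ x, ∑ y, if w x y < c * ∑ x', p x' * w x' y then p x * w x y else 0

lemma sum_sum_mul_eq_one (hp1 : ∑ x, p x = 1) (hw1 : ∀ x, ∑ y, w x y = 1) :
    ∑ y, ∑ x, p x * w x y = 1 := by
  simp only [sum_comm (γ := 𝒴), ← mul_sum, hw1, mul_one, hp1]

lemma prDensityRatioLT_nonneg (hp : ∀ x, 0 ≤ p x) (hw : ∀ x y, 0 ≤ w x y) (c : ℝ) :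
    0 ≤ prDensityRatioLT p w c :=
  sum_nonneg fun x _ => sum_nonneg fun y _ => by
    split_ifs
    exacts [mul_nonneg (hp x) (hw x y), le_rfl]

lemma prDensityRatioLT_le (hp : ∀ x, 0 ≤ p x) (hw : ∀ x y, 0 ≤ w x y)
    (hp1 : ∑ x, p x = 1) (hw1 : ∀ x, ∑ y, w x y = 1) {c : ℝ} (hc : 0 ≤ c) :
    prDensityRatioLT p w c ≤ c := by
  have hq : ∀ y, 0 ≤ ∑ x, p x * w x y := fun y => sum_nonneg fun x _ => mul_nonneg (hp x) (hw x y)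
  calc prDensityRatioLT p w c ≤ ∑ x, ∑ y, p x * (c * ∑ x', p x' * w x' y) := by
        refine sum_le_sum fun x _ => sum_le_sum fun y _ => ?_
        split_ifs with h
        · exact mul_le_mul_of_nonneg_left h.le (hp x)
        · exact mul_nonneg (hp x) (mul_nonneg hc (hq y))
    _ = c := by
        simp only [← mul_sum, ← sum_mul, hp1, sum_sum_mul_eq_one hp1 hw1]
        ring

lemma rpow_neg_card_le_gallagerSum [Nonempty 𝒴] (hp : ∀ x, 0 ≤ p x) (hw : ∀ x y, 0 ≤ w x y)
    (hp1 : ∑ x, p x = 1) (hw1 : ∀ x, ∑ y, w x y = 1) {ρ : ℝ} (hρ : 0 ≤ ρ) :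
    (Fintype.card 𝒴 : ℝ) ^ (-ρ) ≤ gallagerSum p w ρ := by
  set q : 𝒴 → ℝ := fun y => ∑ x, p x * w x y
  have hq : ∀ y, 0 ≤ q y := fun y => sum_nonneg fun x _ => mul_nonneg (hp x) (hw x y)
  have hC : (0 : ℝ) < Fintype.card 𝒴 := by exact_mod_cast Fintype.card_pos
  -- `w ≤ 1` and `1/(1+ρ) ≤ 1` give `w ≤ w ^ (1/(1+ρ))`
  have hq_le : ∀ y, q y ≤ ∑ x, p x * w x y ^ (1 / (1 + ρ)) := fun y =>
    sum_le_sum fun x _ => mul_le_mul_of_nonneg_left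
      (Real.self_le_rpow_of_le_one (hw x y)
        ((single_le_sum (fun y' _ => hw x y') (mem_univ y)).trans_eq (hw1 x))
        (div_le_one_of_le₀ (by linarith) (by linarith))) (hp x)
  have hpow : 1 ≤ (Fintype.card 𝒴 : ℝ) ^ ρ * ∑ y, q y ^ (1 + ρ) := by
    have := Real.rpow_sum_le_const_mul_sum_rpow_of_nonneg (s := univ) (f := q)
      (p := 1 + ρ) (by linarith) fun y _ => hq y
    rwa [sum_sum_mul_eq_one hp1 hw1, Real.one_rpow, card_univ, add_sub_cancel_left] at this
  calc (Fintype.card 𝒴 : ℝ) ^ (-ρ) ≤ ∑ y, q y ^ (1 + ρ) := by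
        rw [Real.rpow_neg hC.le, inv_le_iff_one_le_mul₀' (Real.rpow_pos_of_pos hC ρ)]
        exact hpow
    _ ≤ gallagerSum p w ρ :=
        sum_le_sum fun y _ => Real.rpow_le_rpow (hq y) (hq_le y) (by linarith)

lemma add_rpow_le_two_rpow_mul {a b r : ℝ} (ha : 0 ≤ a) (hb : 0 ≤ b) (hr : 1 ≤ r) :
    (a + b) ^ r ≤ 2 ^ (r - 1) * (a ^ r + b ^ r) := by
  lift a to NNReal using ha
  lift b to NNReal using hb
  exact_mod_cast NNReal.rpow_add_le_mul_rpow_add_rpow a b hr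

lemma rpow_sum_ite_lt_le {p v : 𝒳 → ℝ} (hp : ∀ x, 0 ≤ p x) (hv : ∀ x, 0 ≤ v x)
    {c ρ : ℝ} (hc : 0 < c) (hρ : 0 ≤ ρ) :
    (∑ x, if v x < c * ∑ x', p x' * v x' then 0 else p x * v x ^ (1 / (1 + ρ))) ^ (1 + ρ)
      ≤ c ^ (-ρ) * ∑ x, p x * v x := by
  set Q := ∑ x, p x * v x
  set r := 1 / (1 + ρ)
  have hr : 0 < r := by positivity
  have hQ : 0 ≤ Q := sum_nonneg fun x _ => mul_nonneg (hp x) (hv x)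
  rcases hQ.eq_or_lt with hQ0 | hQpos
  · have hpv : ∀ x, p x * v x = 0 := fun x =>
      (sum_eq_zero_iff_of_nonneg fun x _ => mul_nonneg (hp x) (hv x)).1 hQ0.symm x (mem_univ x)
    have hsum : (∑ x, if v x < c * Q then 0 else p x * v x ^ r) = 0 := by
      refine sum_eq_zero fun x _ => ?_
      rcases mul_eq_zero.1 (hpv x) with h | h <;> simp [h, Real.zero_rpow hr.ne']
    rw [hsum, ← hQ0, Real.zero_rpow (by linarith), mul_zero]
  set K := c * Q
  have hK : 0 < K := mul_pos hc hQpos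
  -- on `{v ≥ K}`, `v ^ r = v · v ^ (-ρ r) ≤ v · K ^ (-ρ r)`
  have hterm : ∀ x, (if v x < K then 0 else p x * v x ^ r) ≤ p x * v x * K ^ (-(ρ * r)) := by
    intro x
    split_ifs with h
    · exact mul_nonneg (mul_nonneg (hp x) (hv x)) (Real.rpow_nonneg hK.le _)
    · have hvpos : 0 < v x := hK.trans_le (not_lt.1 h)
      have hsplit : v x ^ r = v x * v x ^ (-(ρ * r)) := by
        have hexp : 1 + -(ρ * r) = r := by simp only [r]; field_simp; ring
        rw [← Real.rpow_one_add' hvpos.le (by rw [hexp]; exact hr.ne'), hexp]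
      rw [hsplit, ← mul_assoc]
      exact mul_le_mul_of_nonneg_left
        (Real.rpow_le_rpow_of_nonpos hK (not_lt.1 h) (by nlinarith))
        (mul_nonneg (hp x) (hv x))
  have hle : (∑ x, if v x < K then 0 else p x * v x ^ r) ≤ Q * K ^ (-(ρ * r)) := by
    rw [sum_mul]
    exact sum_le_sum fun x _ => hterm x
  have hnn : 0 ≤ ∑ x, if v x < K then 0 else p x * v x ^ r := sum_nonneg fun x _ => by
    split_ifs
    exacts [le_rfl, mul_nonneg (hp x) (Real.rpow_nonneg (hv x) r)]
  calc (∑ x, if v x < K then 0 else p x * v x ^ r) ^ (1 + ρ)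
      ≤ (Q * K ^ (-(ρ * r))) ^ (1 + ρ) := Real.rpow_le_rpow hnn hle (by linarith)
    _ = c ^ (-ρ) * Q := by
      rw [Real.mul_rpow hQ (Real.rpow_nonneg hK.le _), ← Real.rpow_mul hK.le,
        show -(ρ * r) * (1 + ρ) = -ρ by simp only [r]; field_simp,
        Real.mul_rpow hc.le hQ, Real.rpow_neg hQ, Real.rpow_add hQpos, Real.rpow_one]
      field_simp

/-- Gallager's bound split at the threshold `w(y|x) = c·q(y)`: the part above the threshold is
controlled by `c ^ (-ρ)`, the part below it by Jensen's inequality. -/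
lemma gallagerSum_le (hp : ∀ x, 0 ≤ p x) (hw : ∀ x y, 0 ≤ w x y)
    (hp1 : ∑ x, p x = 1) (hw1 : ∀ x, ∑ y, w x y = 1) {c ρ : ℝ} (hc : 0 < c)
    (hρ0 : 0 ≤ ρ) (hρ1 : ρ ≤ 1) :
    gallagerSum p w ρ ≤ 2 * (c ^ (-ρ) + prDensityRatioLT p w c) := by
  set r := 1 / (1 + ρ)
  set q : 𝒴 → ℝ := fun y => ∑ x, p x * w x y
  set A : 𝒴 → ℝ := fun y => ∑ x, if w x y < c * q y then 0 else p x * w x y ^ r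
  set B : 𝒴 → ℝ := fun y => ∑ x, p x * if w x y < c * q y then w x y ^ r else 0
  have hwr : ∀ x y, 0 ≤ w x y ^ r := fun x y => Real.rpow_nonneg (hw x y) r
  have hA0 : ∀ y, 0 ≤ A y := fun y => sum_nonneg fun x _ => by
    split_ifs
    exacts [le_rfl, mul_nonneg (hp x) (hwr x y)]
  have hB0 : ∀ y, 0 ≤ B y := fun y => sum_nonneg fun x _ => mul_nonneg (hp x) (by
    split_ifs
    exacts [hwr x y, le_rfl])
  have hAB : ∀ y, ∑ x, p x * w x y ^ r = A y + B y := fun y => by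
    simp only [A, B, ← sum_add_distrib]
    refine sum_congr rfl fun x _ => ?_
    split_ifs <;> simp
  have hA : ∀ y, A y ^ (1 + ρ) ≤ c ^ (-ρ) * q y := fun y =>
    rpow_sum_ite_lt_le hp (fun x => hw x y) hc hρ0
  have hB : ∀ y, B y ^ (1 + ρ) ≤ ∑ x, if w x y < c * q y then p x * w x y else 0 := by
    intro y
    refine (Real.rpow_arith_mean_le_arith_mean_rpow univ p _ (fun x _ => hp x) hp1
      (fun x _ => ?_) (by linarith)).trans_eq (sum_congr rfl fun x _ => ?_)
    · split_ifs
      exacts [hwr x y, le_rfl]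
    · split_ifs
      · rw [← Real.rpow_mul (hw x y), one_div_mul_cancel (by linarith), Real.rpow_one]
      · rw [Real.zero_rpow (by linarith), mul_zero]
  have htwo : (2 : ℝ) ^ (1 + ρ - 1) ≤ 2 := by
    simpa using Real.rpow_le_rpow_of_exponent_le one_le_two hρ1
  calc gallagerSum p w ρ = ∑ y, (A y + B y) ^ (1 + ρ) := sum_congr rfl fun y _ => by rw [hAB]
    _ ≤ ∑ y, 2 * (c ^ (-ρ) * q y + ∑ x, if w x y < c * q y then p x * w x y else 0) := by
      refine sum_le_sum fun y _ => ?_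
      calc (A y + B y) ^ (1 + ρ) ≤ 2 ^ (1 + ρ - 1) * (A y ^ (1 + ρ) + B y ^ (1 + ρ)) :=
            add_rpow_le_two_rpow_mul (hA0 y) (hB0 y) (by linarith)
        _ ≤ 2 * (c ^ (-ρ) * q y + ∑ x, if w x y < c * q y then p x * w x y else 0) :=
            mul_le_mul htwo (add_le_add (hA y) (hB y))
              (add_nonneg (Real.rpow_nonneg (hA0 y) _) (Real.rpow_nonneg (hB0 y) _)) two_pos.le
    _ = 2 * (c ^ (-ρ) + prDensityRatioLT p w c) := by
      rw [← mul_sum, sum_add_distrib, ← mul_sum, sum_sum_mul_eq_one hp1 hw1, mul_one,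
        prDensityRatioLT, sum_comm]

lemma log_gallagerSum_le [Nonempty 𝒴] (hp : ∀ x, 0 ≤ p x) (hw : ∀ x y, 0 ≤ w x y)
    (hp1 : ∑ x, p x = 1) (hw1 : ∀ x, ∑ y, w x y = 1) {t ρ : ℝ} (hρ0 : 0 ≤ ρ) (hρ1 : ρ ≤ 1)
    (htail : prDensityRatioLT p w (Real.exp t) ≤ Real.exp (-(ρ * t))) :
    Real.log (gallagerSum p w ρ) ≤ Real.log 4 - ρ * t := by
  have hpos : 0 < gallagerSum p w ρ := (Real.rpow_pos_of_pos (by exact_mod_cast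
    Fintype.card_pos) _).trans_le (rpow_neg_card_le_gallagerSum hp hw hp1 hw1 hρ0)
  have hle : gallagerSum p w ρ ≤ 4 * Real.exp (-(ρ * t)) := by
    have := gallagerSum_le hp hw hp1 hw1 (Real.exp_pos t) hρ0 hρ1
    rw [← Real.exp_mul, mul_neg, mul_comm t] at this
    linarith
  calc Real.log (gallagerSum p w ρ) ≤ Real.log (4 * Real.exp (-(ρ * t))) :=
        Real.log_le_log hpos hle
    _ = Real.log 4 - ρ * t := by
        rw [Real.log_mul (by norm_num) (Real.exp_pos _).ne', Real.log_exp, sub_eq_add_neg]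

end FiniteChannel

lemma one_div_mul_log_div_lt_iff {n a b β : ℝ} (hn : 0 < n) (ha : 0 < a) (hb : 0 < b) :
    1 / n * Real.log (a / b) < β ↔ a < Real.exp (n * β) * b := by
  rw [one_div_mul_eq_div, div_lt_iff₀ hn, Real.log_lt_iff_lt_exp (div_pos ha hb),
    div_lt_iff₀ hb, mul_comm β n]

section GeneralChannel

open Finset

variable {𝒳 𝒴 : Type*} [Fintype 𝒳] [Fintype 𝒴]
  {W : (n : ℕ) → (Fin n → 𝒳) → (Fin n → 𝒴) → ℝ} {P : (n : ℕ) → (Fin n → 𝒳) → ℝ}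

lemma prInfDensityLT_eq_prDensityRatioLT (hP : ∀ n x, 0 ≤ P n x) (hW : ∀ n x y, 0 ≤ W n x y)
    (β : ℝ) {n : ℕ} (hn : n ≠ 0) :
    prInfDensityLT P W β n = prDensityRatioLT (P n) (W n) (Real.exp (n * β)) := by
  refine sum_congr rfl fun x _ => sum_congr rfl fun y _ => ?_
  by_cases h0 : P n x * W n x y = 0
  · simp [h0]
  have hPW : 0 < P n x * W n x y := (mul_nonneg (hP n x) (hW n x y)).lt_of_ne' h0
  have hWpos : 0 < W n x y := (hW n x y).lt_of_ne fun h => h0 (by rw [← h, mul_zero])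
  have hq : 0 < ∑ x', P n x' * W n x' y := hPW.trans_le <|
    single_le_sum (f := fun x' => P n x' * W n x' y)
      (fun x' _ => mul_nonneg (hP n x') (hW n x' y)) (mem_univ x)
  simp only [one_div_mul_log_div_lt_iff (by positivity : (0 : ℝ) < n) hWpos hq]

lemma tendsto_prInfDensityLT_of_neg (hP : ∀ n x, 0 ≤ P n x) (hP1 : ∀ n, ∑ x, P n x = 1)
    (hW : ∀ n x y, 0 ≤ W n x y) (hW1 : ∀ n x, ∑ y, W n x y = 1) {β : ℝ} (hβ : β < 0) :
    Tendsto (prInfDensityLT P W β) atTop (nhds 0) := by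
  refine squeeze_zero' ?_ ?_ (Real.tendsto_exp_atBot.comp
    (tendsto_natCast_atTop_atTop.atTop_mul_const_of_neg hβ))
  all_goals
    filter_upwards [eventually_ne_atTop 0] with n hn
    rw [prInfDensityLT_eq_prDensityRatioLT hP hW β hn]
  · exact prDensityRatioLT_nonneg (hP n) (hW n) _
  · exact prDensityRatioLT_le (hP n) (hW n) (hP1 n) (hW1 n) (Real.exp_pos _).le

lemma exists_lt_tendsto_prInfDensityLT (hP : ∀ n x, 0 ≤ P n x) (hP1 : ∀ n, ∑ x, P n x = 1)
    (hW : ∀ n x y, 0 ≤ W n x y) (hW1 : ∀ n x, ∑ y, W n x y = 1) {R : ℝ}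
    (hR : R < specInfMutualInfo P W) :
    ∃ β, R < β ∧ Tendsto (prInfDensityLT P W β) atTop (nhds 0) := by
  obtain ⟨β, hβ, hRβ⟩ := exists_lt_of_lt_csSup
    ⟨-1, tendsto_prInfDensityLT_of_neg hP hP1 hW hW1 (by norm_num)⟩ hR
  exact ⟨β, hRβ, hβ⟩

lemma exists_source_lt_specInfMutualInfo [Nonempty 𝒳] {R : ℝ} (hR : R < capacity W) :
    ∃ P : (n : ℕ) → (Fin n → 𝒳) → ℝ, (∀ n x, 0 ≤ P n x) ∧ (∀ n, ∑ x, P n x = 1) ∧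
      R < specInfMutualInfo P W := by
  have huniform : ∀ n, ∑ _x : Fin n → 𝒳, (Fintype.card (Fin n → 𝒳) : ℝ)⁻¹ = 1 := fun n => by
    rw [sum_const, card_univ, nsmul_eq_mul, mul_inv_cancel₀ (by exact_mod_cast Fintype.card_ne_zero)]
  obtain ⟨_, ⟨P, hP, hP1, rfl⟩, hRI⟩ :=
    exists_lt_of_lt_csSup (by exact ⟨_, _, fun n x => by positivity, huniform, rfl⟩) hR
  exact ⟨P, hP, hP1, hRI⟩

lemma gallagerE0_sub_le_gallagerExponent [Nonempty 𝒴] (hW : ∀ n x y, 0 ≤ W n x y)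
    (hW1 : ∀ n x, ∑ y, W n x y = 1) (R : ℝ) {n : ℕ} {Pn : (Fin n → 𝒳) → ℝ}
    (hPn : ∀ x, 0 ≤ Pn x) (hPn1 : ∑ x, Pn x = 1) {ρ : ℝ} (hρ : ρ ∈ Set.Icc 0 1) :
    gallagerE0 n Pn (W n) ρ - ρ * R ≤ gallagerExponent W R n := by
  refine le_csSup ⟨1 / n * Real.log (Fintype.card (Fin n → 𝒴) : ℝ) + |R|, ?_⟩
    ⟨Pn, hPn, hPn1, ρ, hρ, rfl⟩
  rintro _ ⟨Pn', hPn', hPn1', ρ', ⟨hρ0, hρ1⟩, rfl⟩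
  set C : ℝ := (Fintype.card (Fin n → 𝒴) : ℝ)
  have hC : 1 ≤ C := Nat.one_le_cast.2 Fintype.card_pos
  have hlog : -Real.log (gallagerSum Pn' (W n) ρ') ≤ Real.log C := by
    have hS := rpow_neg_card_le_gallagerSum hPn' (hW n) hPn1' (hW1 n) hρ0
    have := Real.log_le_log (by positivity) hS
    rw [Real.log_rpow (by positivity)] at this
    nlinarith [Real.log_nonneg hC]
  have hE0 : gallagerE0 n Pn' (W n) ρ' ≤ 1 / n * Real.log C := by
    rw [gallagerE0, neg_mul, ← mul_neg]
    exact mul_le_mul_of_nonneg_left hlog (by positivity)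
  nlinarith [mul_nonneg hρ0 (neg_le_iff_add_nonneg.1 (neg_abs_le R)), mul_nonneg (sub_nonneg.2 hρ1) (abs_nonneg R)]

lemma eventually_le_mul_gallagerExponent [Nonempty 𝒴] (hP : ∀ n x, 0 ≤ P n x)
    (hP1 : ∀ n, ∑ x, P n x = 1) (hW : ∀ n x y, 0 ≤ W n x y) (hW1 : ∀ n x, ∑ y, W n x y = 1)
    {β : ℝ} (hβ : Tendsto (prInfDensityLT P W β) atTop (nhds 0)) (R : ℝ) (k : ℕ) :
    ∀ᶠ n : ℕ in atTop, k * (β - R) - Real.log 4 ≤ n * gallagerExponent W R n := by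
  filter_upwards [eventually_ge_atTop (max k 1),
    hβ.eventually (eventually_le_nhds (Real.exp_pos (-(k * β))))] with n hn htail
  have hn0 : (0 : ℝ) < n := by exact_mod_cast (le_of_max_le_right hn)
  have hkn : (k : ℝ) ≤ n := by exact_mod_cast (le_of_max_le_left hn)
  set ρ : ℝ := k / n
  have hρ : ρ ∈ Set.Icc 0 1 := ⟨by positivity, div_le_one_of_le₀ hkn hn0.le⟩
  have hnρ : n * ρ = k := by simp only [ρ]; field_simp
  have hρt : ρ * (n * β) = k * β := by rw [← hnρ]; ring
  have hlog := log_gallagerSum_le (hP n) (hW n) (hP1 n) (hW1 n) hρ.1 hρ.2 (t := n * β)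
    (by rwa [hρt, ← prInfDensityLT_eq_prDensityRatioLT hP hW β (by omega)])
  have hE0 : n * gallagerE0 n (P n) (W n) ρ = -Real.log (gallagerSum (P n) (W n) ρ) := by
    rw [gallagerE0, ← gallagerSum]
    field_simp
  calc k * (β - R) - Real.log 4 ≤ n * (gallagerE0 n (P n) (W n) ρ - ρ * R) := by
        rw [mul_sub (n : ℝ), hE0, ← mul_assoc, hnρ]
        linarith
    _ ≤ n * gallagerExponent W R n :=
        mul_le_mul_of_nonneg_left
          (gallagerE0_sub_le_gallagerExponent hW hW1 R (hP n) (hP1 n) hρ) hn0.le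

end GeneralChannel

theorem gallager_exponent_tendsto_atTop
    {𝒳 𝒴 : Type*} [Fintype 𝒳] [Fintype 𝒴] [Nonempty 𝒳] [Nonempty 𝒴]
    (W : (n : ℕ) → (Fin n → 𝒳) → (Fin n → 𝒴) → ℝ)
    (hWnn : ∀ n x y, 0 ≤ W n x y) (hW1 : ∀ n x, ∑ y : Fin n → 𝒴, W n x y = 1)
    (R : ℝ) (hR : R < capacity W) :
    Tendsto (fun n : ℕ => (n : ℝ) * gallagerExponent W R n) atTop atTop := by
  obtain ⟨P, hP, hP1, hRI⟩ := exists_source_lt_specInfMutualInfo hR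
  obtain ⟨β, hRβ, hβ⟩ := exists_lt_tendsto_prInfDensityLT hP hP1 hWnn hW1 hRI
  refine tendsto_atTop.2 fun b => ?_
  obtain ⟨k, hk⟩ := exists_nat_gt ((b + Real.log 4) / (β - R))
  rw [div_lt_iff₀ (sub_pos.2 hRβ)] at hk
  filter_upwards [eventually_le_mul_gallagerExponent hP hP1 hWnn hW1 hβ R k] with n hn
  linarith
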